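/- arXiv:1807.08078 — 2 statements merged into one kernel-verified Lean document; each statement's English description precedes it below -/
import Mathlib

section
/- Let G=(V,E) be a general dissimilarity graph. If S⊆E is a regular cover of all unbalanced cycles of G, then S can be partitioned into two disjoint sets S⁺ and S⁻ such that every unbalanced cycle of G is either non-top covered by S⁺ (i.e., S⁺ contains one of its non-top edges) or top covered by S⁻ (i.e., S⁻ contains its top edge). -/
open SimpleGraph

noncomputable section

variable {V : Type*}

/-- The length of a walk: the sum of the weights of its edges. -/
def wlen {G : SimpleGraph V} (w : Sym2 V → ℝ) {u v : V} (p : G.Walk u v) : ℝ :=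
  (p.edges.map w).sum

/-- The shortest-path distance between two vertices: the minimum length of a path. -/
def spDist (G : SimpleGraph V) (w : Sym2 V → ℝ) (u v : V) : ℝ :=
  sInf {x : ℝ | ∃ p : G.Walk u v, p.IsPath ∧ wlen w p = x}

/-- `(G, w)` is a general metric graph: the weight of every edge equals the
shortest-path distance between its endpoints. -/
def IsMetricGraph (G : SimpleGraph V) (w : Sym2 V → ℝ) : Prop :=
  ∀ u v : V, G.Adj u v → w s(u, v) = spDist G w u v

/-- `e` is a top edge of the closed walk `p`: it lies on `p` and its weight strictly
exceeds the sum of the weights of all the other edges of `p`. -/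
def IsTopEdge {G : SimpleGraph V} (w : Sym2 V → ℝ) {v : V} (p : G.Walk v v)
    (e : Sym2 V) : Prop :=
  e ∈ p.edges ∧ (p.edges.map w).sum - w e < w e

/-- A cycle is unbalanced if it has a top edge. -/
def IsUnbalanced {G : SimpleGraph V} (w : Sym2 V → ℝ) {v : V} (p : G.Walk v v) : Prop :=
  ∃ e, IsTopEdge w p e

/-- `S` is a regular cover of all unbalanced cycles of `G`:
it contains at least one edge of every unbalanced cycle. -/
def RegularCover (G : SimpleGraph V) (w : Sym2 V → ℝ) (S : Set (Sym2 V)) : Prop :=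
  ∀ (v : V) (p : G.Walk v v), p.IsCycle → IsUnbalanced w p → ∃ e ∈ p.edges, e ∈ S

/-- `S` is a non-top cover of all unbalanced cycles of `G`:
it contains at least one non-top edge of every unbalanced cycle. -/
def NonTopCover (G : SimpleGraph V) (w : Sym2 V → ℝ) (S : Set (Sym2 V)) : Prop :=
  ∀ (v : V) (p : G.Walk v v), p.IsCycle → IsUnbalanced w p →
    ∃ e ∈ p.edges, e ∈ S ∧ ¬ IsTopEdge w p e

section Aux

variable {G : SimpleGraph V} {w : Sym2 V → ℝ}

lemma wlen_append {u v x : V} (p : G.Walk u v) (q : G.Walk v x) :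
    wlen w (p.append q) = wlen w p + wlen w q := by
  simp [wlen, Walk.edges_append]

lemma wlen_reverse {u v : V} (p : G.Walk u v) : wlen w p.reverse = wlen w p := by
  simp [wlen, Walk.edges_reverse, List.map_reverse, List.sum_reverse]

lemma wlen_cons {u v x : V} (h : G.Adj u v) (p : G.Walk v x) :
    wlen w (p.cons h) = w s(u, v) + wlen w p := by
  simp [wlen]

section nonneg
variable (hw : ∀ e ∈ G.edgeSet, 0 ≤ w e)
include hw

lemma wlen_nonneg {u v : V} (p : G.Walk u v) : 0 ≤ wlen w p := by
  apply List.sum_nonneg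
  intro x hx
  obtain ⟨e, he, rfl⟩ := List.mem_map.mp hx
  exact hw e (p.edges_subset_edgeSet he)

lemma le_wlen_of_mem {u v : V} {p : G.Walk u v} {e : Sym2 V} (he : e ∈ p.edges) :
    w e ≤ wlen w p := by
  apply List.single_le_sum
  · intro x hx
    obtain ⟨f, hf, rfl⟩ := List.mem_map.mp hx
    exact hw f (p.edges_subset_edgeSet hf)
  · exact List.mem_map.mpr ⟨e, he, rfl⟩

lemma wlen_dropUntil_le [DecidableEq V] {u v x : V} (p : G.Walk v x) (h : u ∈ p.support) :
    wlen w (p.dropUntil u h) ≤ wlen w p := by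
  conv_rhs => rw [← p.take_spec h]
  rw [wlen_append]
  have := wlen_nonneg hw (p.takeUntil u h)
  linarith

lemma wlen_bypass_le [DecidableEq V] {u v : V} (p : G.Walk u v) :
    wlen w p.bypass ≤ wlen w p := by
  induction p with
  | nil => exact le_refl _
  | cons h p ih =>
    rw [Walk.bypass]
    split_ifs with hb
    · calc wlen w (p.bypass.dropUntil _ hb) ≤ wlen w p.bypass := wlen_dropUntil_le hw _ hb
        _ ≤ wlen w p := ih
        _ ≤ _ := by
            rw [wlen_cons]
            have := hw s(_, _) ((SimpleGraph.mem_edgeSet G).mpr h)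
            linarith
    · rw [wlen_cons, wlen_cons]
      linarith

end nonneg

/-- Decompose a walk at an edge. -/
lemma exists_decomp_of_mem_edges {u v : V} (p : G.Walk u v) {e : Sym2 V}
    (he : e ∈ p.edges) :
    ∃ (a b : V) (p1 : G.Walk u a) (p2 : G.Walk b v),
      e = s(a, b) ∧ p.edges = p1.edges ++ e :: p2.edges := by
  induction p with
  | nil => simp at he
  | @cons x y z h p ih =>
    rw [Walk.edges_cons, List.mem_cons] at he
    rcases he with he | he
    · exact ⟨x, y, Walk.nil, p, he, by simp [he]⟩
    · obtain ⟨a, b, p1, p2, hab, hsplit⟩ := ih he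
      exact ⟨a, b, p1.cons h, p2, hab, by simp [hsplit]⟩

section nn
variable (hw : ∀ e ∈ G.edgeSet, 0 ≤ w e)
include hw

/-- The top edge of a closed walk is unique. -/
lemma topEdge_unique {v : V} {p : G.Walk v v} {e f : Sym2 V}
    (he : IsTopEdge w p e) (hf : IsTopEdge w p f) : e = f := by
  by_contra hne
  classical
  have hperm : p.edges.Perm (e :: p.edges.erase e) := List.perm_cons_erase he.1
  have hsum : (p.edges.map w).sum = w e + ((p.edges.erase e).map w).sum := by
    rw [List.Perm.sum_eq (hperm.map w)]; simp
  have hfmem : f ∈ p.edges.erase e := (List.mem_erase_of_ne (Ne.symm hne)).mpr hf.1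
  have hfle : w f ≤ ((p.edges.erase e).map w).sum := by
    apply List.single_le_sum
    · intro x hx
      obtain ⟨g, hg, rfl⟩ := List.mem_map.mp hx
      exact hw g (p.edges_subset_edgeSet (List.mem_of_mem_erase hg))
    · exact List.mem_map.mpr ⟨f, hfmem, rfl⟩
  have hperm' : p.edges.Perm (f :: p.edges.erase f) := List.perm_cons_erase hf.1
  have hsum' : (p.edges.map w).sum = w f + ((p.edges.erase f).map w).sum := by
    rw [List.Perm.sum_eq (hperm'.map w)]; simp
  have hemem : e ∈ p.edges.erase f := (List.mem_erase_of_ne hne).mpr he.1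
  have hele : w e ≤ ((p.edges.erase f).map w).sum := by
    apply List.single_le_sum
    · intro x hx
      obtain ⟨g, hg, rfl⟩ := List.mem_map.mp hx
      exact hw g (p.edges_subset_edgeSet (List.mem_of_mem_erase hg))
    · exact List.mem_map.mpr ⟨e, hemem, rfl⟩
  have h1 := he.2
  have h2 := hf.2
  rw [hsum] at h1
  rw [hsum'] at h2
  linarith

/-- Heavy-edge cycle extraction from a closed walk. -/
lemma exists_cycle_of_heavy [DecidableEq V] {u : V} (r : G.Walk u u) {e : Sym2 V}
    (he : e ∈ r.edges) (hheavy : wlen w r - w e < w e) :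
    ∃ (a : V) (c : G.Walk a a), c.IsCycle ∧ IsTopEdge w c e ∧
      wlen w c ≤ wlen w r ∧ ∀ f ∈ c.edges, f ∈ r.edges := by
  obtain ⟨a, b, p1, p2, hab, hsplit⟩ := exists_decomp_of_mem_edges r he
  have hadj : G.Adj a b := (G.mem_edgeSet).mp (hab ▸ r.edges_subset_edgeSet he)
  have hwr : wlen w r = wlen w p1 + w e + wlen w p2 := by
    simp [wlen, hsplit]; ring
  set W : G.Walk b a := p2.append p1 with hW
  have hWlen : wlen w W = wlen w r - w e := by rw [hW, wlen_append]; linarith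
  have heW : e ∉ W.edges := by
    intro hmem
    have : w e ≤ wlen w W := le_wlen_of_mem hw hmem
    linarith
  have hbpath := W.bypass_isPath
  have hbe : W.bypass.edges ⊆ W.edges := W.edges_bypass_subset
  have heB : e ∉ W.bypass.edges := fun h => heW (hbe h)
  have hblen : wlen w W.bypass ≤ wlen w W := wlen_bypass_le hw W
  refine ⟨a, (W.bypass).cons hadj, ?_, ?_, ?_, ?_⟩
  · exact (Walk.cons_isCycle_iff _ hadj).mpr ⟨hbpath, hab ▸ heB⟩
  · constructor
    · simp [hab]
    · have h3 : wlen w ((W.bypass).cons hadj) = w e + wlen w W.bypass := by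
        rw [wlen_cons, hab]
      have h2 : ((((W.bypass).cons hadj)).edges.map w).sum = wlen w ((W.bypass).cons hadj) := rfl
      rw [h2, h3]
      linarith
  · rw [wlen_cons, ← hab]; linarith
  · intro f hf
    rw [Walk.edges_cons, List.mem_cons] at hf
    rcases hf with hf | hf
    · rw [hf, ← hab]; exact he
    · have : f ∈ W.edges := hbe hf
      rw [hW, Walk.edges_append, List.mem_append] at this
      rw [hsplit, List.mem_append, List.mem_cons]
      tauto

end nn
end Aux

/-- If `S ⊆ E` is a regular cover of all unbalanced cycles, then `S` can be
partitioned into disjoint sets `S⁺` and `S⁻` such that every unbalanced cycle is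
either non-top covered by `S⁺` or top covered by `S⁻`. -/
theorem stmt2 [Fintype V] (G : SimpleGraph V) (hconn : G.Connected)
    (w : Sym2 V → ℝ) (hw : ∀ e ∈ G.edgeSet, 0 < w e)
    (S : Set (Sym2 V)) (hSE : S ⊆ G.edgeSet) (hS : RegularCover G w S) :
    ∃ Sp Sm : Set (Sym2 V),
      Sp ∪ Sm = S ∧ Disjoint Sp Sm ∧
      ∀ (v : V) (p : G.Walk v v), p.IsCycle → IsUnbalanced w p →
        (∃ e ∈ p.edges, e ∈ Sp ∧ ¬ IsTopEdge w p e) ∨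
        (∃ e ∈ p.edges, IsTopEdge w p e ∧ e ∈ Sm) := by
  classical
  have hw' : ∀ e ∈ G.edgeSet, 0 ≤ w e := fun e he => (hw e he).le
  set Bad : Sym2 V → Prop := fun t =>
    ∃ (u : V) (q : G.Walk u u), q.IsCycle ∧ IsTopEdge w q t ∧
      ∀ f ∈ q.edges, f ≠ t → f ∉ S with hBadDef
  have hBadS : ∀ t, Bad t → t ∈ S := by
    rintro t ⟨u, q, hq, ht, hcov⟩
    obtain ⟨g, hg, hgS⟩ := hS u q hq ⟨t, ht⟩
    by_cases hgt : g = t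
    · exact hgt ▸ hgS
    · exact absurd hgS (hcov g hg hgt)
  refine ⟨{e | e ∈ S ∧ ¬ Bad e}, {e | e ∈ S ∧ Bad e}, ?_, ?_, ?_⟩
  · ext e
    simp only [Set.mem_union, Set.mem_setOf_eq]
    tauto
  · rw [Set.disjoint_left]
    rintro e ⟨_, h1⟩ ⟨_, h2⟩
    exact h1 h2
  · by_contra hmain
    push_neg at hmain
    -- set of counterexample lengths
    set A : Set ℝ := {x | ∃ (v : V) (p : G.Walk v v), p.IsCycle ∧ IsUnbalanced w p ∧
      (∀ e ∈ p.edges, (e ∈ S ∧ ¬ Bad e) → IsTopEdge w p e) ∧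
      (∀ e ∈ p.edges, IsTopEdge w p e → ¬(e ∈ S ∧ Bad e)) ∧ wlen w p = x} with hAdef
    have hAne : A.Nonempty := by
      obtain ⟨v, p, hp, hub, hc1, hc2⟩ := hmain
      refine ⟨wlen w p, v, p, hp, hub, ?_, ?_, rfl⟩
      · intro e he hmem
        exact hc1 e he hmem
      · intro e he htop
        exact fun hmem => hc2 e he htop hmem
    haveI : Fintype G.edgeSet := Fintype.ofFinite _
    have hAfin : A.Finite := by
      set N := G.edgeFinset.card with hN
      have hone : ∀ v : V,
          {x : ℝ | ∃ p : G.Walk v v, p.length < N + 1 ∧ wlen w p = x}.Finite := by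
        intro v
        have heq : {x : ℝ | ∃ p : G.Walk v v, p.length < N + 1 ∧ wlen w p = x}
            = Set.range (fun q : {p : G.Walk v v | p.length < N + 1} => wlen w q.1) := by
          ext x
          simp only [Set.mem_setOf_eq, Set.mem_range, Subtype.exists]
          constructor
          · rintro ⟨p, hp, rfl⟩; exact ⟨p, hp, rfl⟩
          · rintro ⟨p, hp, rfl⟩; exact ⟨p, hp, rfl⟩
        rw [heq]
        exact Set.finite_range _
      have hsub : A ⊆ ⋃ v : V, {x : ℝ | ∃ p : G.Walk v v, p.length < N + 1 ∧ wlen w p = x} := by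
        rintro x ⟨v, p, hp, _, _, _, rfl⟩
        refine Set.mem_iUnion.mpr ⟨v, ⟨p, ?_, rfl⟩⟩
        have := hp.isTrail.length_le_card_edgeFinset
        omega
      exact (Set.finite_iUnion hone).subset hsub
    obtain ⟨x0, hx0A, hmin⟩ := Set.exists_min_image A id hAfin hAne
    obtain ⟨v, p, hp, hub, hh1, hh2, hxw⟩ := hx0A
    obtain ⟨t, ht⟩ := hub
    have ht_nbad : ¬ Bad t := fun hb => hh2 t ht.1 ht ⟨hBadS t hb, hb⟩
    by_cases hex : ∃ e ∈ p.edges, e ∈ S ∧ ¬ IsTopEdge w p e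
    · -- there is a non-top S-edge; it must be bad; do the surgery
      obtain ⟨e, heP, heS, heNT⟩ := hex
      have heBad : Bad e := by
        by_contra h
        exact heNT (hh1 e heP ⟨heS, h⟩)
      obtain ⟨u, q, hq, hqe, hqcov⟩ := heBad
      have hte : t ≠ e := fun h => heNT (h ▸ ht)
      obtain ⟨a, b, p1, p2, hab, hps⟩ := exists_decomp_of_mem_edges p heP
      obtain ⟨a', b', q1, q2, hab', hqs⟩ := exists_decomp_of_mem_edges q hqe.1
      have hqlen' : wlen w q = wlen w q1 + w e + wlen w q2 := by
        simp [wlen, hqs]; ring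
      have hplen' : wlen w p = wlen w p1 + w e + wlen w p2 := by
        simp [wlen, hps]; ring
      have hqtop : wlen w q - w e < w e := hqe.2
      have hq1n : 0 ≤ wlen w q1 := wlen_nonneg hw' q1
      have hq2n : 0 ≤ wlen w q2 := wlen_nonneg hw' q2
      have heq1 : e ∉ q1.edges := by
        intro hmem
        have := le_wlen_of_mem hw' hmem
        linarith
      have heq2 : e ∉ q2.edges := by
        intro hmem
        have := le_wlen_of_mem hw' hmem
        linarith
      have hQ : ∃ Q : G.Walk a b, wlen w Q = wlen w q1 + wlen w q2 ∧
          ∀ f ∈ Q.edges, f ∈ q1.edges ∨ f ∈ q2.edges := by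
        have hsy : s(a, b) = s(a', b') := by rw [← hab, ← hab']
        rcases Sym2.eq_iff.mp hsy with ⟨h1, h2⟩ | ⟨h1, h2⟩
        · subst h1; subst h2
          refine ⟨(q2.append q1).reverse, ?_, ?_⟩
          · rw [wlen_reverse, wlen_append]; ring
          · intro f hf
            rw [Walk.edges_reverse, List.mem_reverse, Walk.edges_append,
              List.mem_append] at hf
            tauto
        · subst h1; subst h2
          refine ⟨q2.append q1, ?_, ?_⟩
          · rw [wlen_append]; ring
          · intro f hf
            rw [Walk.edges_append, List.mem_append] at hf
            tauto
      obtain ⟨Q, hQlen, hQsub⟩ := hQ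
      set r : G.Walk v v := p1.append (Q.append p2) with hr
      have hrlen : wlen w r = wlen w p1 + wlen w Q + wlen w p2 := by
        rw [hr, wlen_append, wlen_append]; ring
      have hwe : 0 < w e := hw e (hSE heS)
      have hrlt : wlen w r < wlen w p := by
        rw [hrlen, hplen', hQlen]
        linarith
      have htr : t ∈ r.edges := by
        have htp : t ∈ p.edges := ht.1
        rw [hps, List.mem_append, List.mem_cons] at htp
        rw [hr, Walk.edges_append, Walk.edges_append, List.mem_append, List.mem_append]
        rcases htp with h | h
        · exact Or.inl h
        · rcases h with h | h
          · exact absurd h hte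
          · exact Or.inr (Or.inr h)
      have hheavy : wlen w r - w t < w t := by
        have := ht.2
        have hwt : (p.edges.map w).sum = wlen w p := rfl
        rw [hwt] at this
        linarith
      obtain ⟨av, c, hc, hct, hclen, hcsub⟩ := exists_cycle_of_heavy hw' r htr hheavy
      have hcA : wlen w c ∈ A := by
        refine ⟨av, c, hc, ⟨t, hct⟩, ?_, ?_, rfl⟩
        · intro f hf hmem
          by_contra hnt
          have hfne_t : f ≠ t := fun h => hnt (h ▸ hct)
          have hfr := hcsub f hf
          rw [hr, Walk.edges_append, Walk.edges_append, List.mem_append,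
            List.mem_append] at hfr
          rcases hfr with h | h | h
          · -- f ∈ p1.edges ⊆ p.edges
            have hfp : f ∈ p.edges := by
              rw [hps, List.mem_append]; exact Or.inl h
            have : IsTopEdge w p f := hh1 f hfp hmem
            exact hfne_t (topEdge_unique hw' this ht)
          · -- f ∈ Q.edges ⊆ q.edges, f ≠ e
            rcases hQsub f h with h' | h'
            · have hfq : f ∈ q.edges := by
                rw [hqs, List.mem_append]; exact Or.inl h'
              have hfe : f ≠ e := fun hfe => heq1 (hfe ▸ h')
              exact hqcov f hfq hfe hmem.1
            · have hfq : f ∈ q.edges := by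
                rw [hqs, List.mem_append, List.mem_cons]; exact Or.inr (Or.inr h')
              have hfe : f ≠ e := fun hfe => heq2 (hfe ▸ h')
              exact hqcov f hfq hfe hmem.1
          · have hfp : f ∈ p.edges := by
              rw [hps, List.mem_append, List.mem_cons]; exact Or.inr (Or.inr h)
            have : IsTopEdge w p f := hh1 f hfp hmem
            exact hfne_t (topEdge_unique hw' this ht)
        · intro f _ hft hmem
          have : f = t := topEdge_unique hw' hft hct
          exact ht_nbad (this ▸ hmem.2)
      have := hmin _ hcA
      simp only [id] at this
      linarith
    · -- no non-top S-edge: the top edge covers and is bad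
      push_neg at hex
      obtain ⟨g, hg, hgS⟩ := hS v p hp ⟨t, ht⟩
      have hgtop : IsTopEdge w p g := hex g hg hgS
      have hbad : Bad g := by
        refine ⟨v, p, hp, hgtop, ?_⟩
        intro f hf hne hfS
        exact hne (topEdge_unique hw' (hex f hf hfS) hgtop)
      exact hh2 g hg hgtop ⟨hgS, hbad⟩
end
end

section
/- Let G=(V,E) be a general dissimilarity graph containing at least one unbalanced cycle, so that δ(G)>0. Then for any edge e=(s,t)∈E: if w(e) = d(s,t) + δ(G) then N_T(e,δ(G)) = csp(s,t), and otherwise N_T(e,δ(G)) = 0. -/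
open SimpleGraph

noncomputable section

variable {V : Type*}

/-- The number of distinct shortest paths from `u` to `v`. -/
def csp (G : SimpleGraph V) (w : Sym2 V → ℝ) (u v : V) : ℕ :=
  Nat.card {p : G.Walk u v // p.IsPath ∧ wlen w p = spDist G w u v}

/-- `c` is the edge set of some cycle of `G`.  (A cycle is determined, up to
rotation and reflection, by its edge set.) -/
def IsCycleSet [DecidableEq V] (G : SimpleGraph V) (c : Finset (Sym2 V)) : Prop :=
  ∃ (v : V) (p : G.Walk v v), p.IsCycle ∧ p.edges.toFinset = c

/-- `e` is a top edge of the cycle with edge set `c`: it lies in `c` and its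
weight strictly exceeds the sum of the weights of all the other edges of `c`. -/
def TopOfSet [DecidableEq V] (w : Sym2 V → ℝ) (c : Finset (Sym2 V)) (e : Sym2 V) : Prop :=
  e ∈ c ∧ ∑ f ∈ c.erase e, w f < w e

/-- A cycle is unbalanced if it has a top edge. -/
def UnbalancedSet [DecidableEq V] (w : Sym2 V → ℝ) (c : Finset (Sym2 V)) : Prop :=
  ∃ e, TopOfSet w c e

/-- `S` contains at least one edge of every unbalanced cycle. -/
def RegularCoverSet [DecidableEq V] (G : SimpleGraph V) (w : Sym2 V → ℝ)
    (S : Set (Sym2 V)) : Prop :=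
  ∀ c : Finset (Sym2 V), IsCycleSet G c → UnbalancedSet w c → ∃ e ∈ c, e ∈ S

/-- `S` contains at least one non-top edge of every unbalanced cycle. -/
def NonTopCoverSet [DecidableEq V] (G : SimpleGraph V) (w : Sym2 V → ℝ)
    (S : Set (Sym2 V)) : Prop :=
  ∀ c : Finset (Sym2 V), IsCycleSet G c → UnbalancedSet w c →
    ∃ e ∈ c, e ∈ S ∧ ¬ TopOfSet w c e

/-- The deficit of a cycle with edge set `c`: the largest edge weight minus the
sum of the weights of all the other edges. -/
def deficitSet (w : Sym2 V → ℝ) (c : Finset (Sym2 V)) : ℝ :=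
  2 * sSup (w '' (c : Set (Sym2 V))) - ∑ f ∈ c, w f

/-- `δ(G)`: the maximum deficit over all cycles of `G`. -/
def deltaG [DecidableEq V] (G : SimpleGraph V) (w : Sym2 V → ℝ) : ℝ :=
  sSup {x : ℝ | ∃ c : Finset (Sym2 V), IsCycleSet G c ∧ deficitSet w c = x}

/-- `N_T(e, a)`: the number of distinct unbalanced cycles of deficit `a`
whose top edge is `e`. -/
def NT [DecidableEq V] (G : SimpleGraph V) (w : Sym2 V → ℝ) (e : Sym2 V) (a : ℝ) : ℕ :=
  Nat.card {c : Finset (Sym2 V) // IsCycleSet G c ∧ TopOfSet w c e ∧ deficitSet w c = a}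

/-- `N_U(e, a)`: the number of distinct unbalanced cycles of deficit `a`
containing `e` as a non-top edge. -/
def NU [DecidableEq V] (G : SimpleGraph V) (w : Sym2 V → ℝ) (e : Sym2 V) (a : ℝ) : ℕ :=
  Nat.card {c : Finset (Sym2 V) // IsCycleSet G c ∧ UnbalancedSet w c ∧
    e ∈ c ∧ ¬ TopOfSet w c e ∧ deficitSet w c = a}

/-!
A cycle through the edge `e = s(s, t)` is `e` together with an `s`–`t` path `P` avoiding `e`;
when `e` is its top edge, its deficit is `w e - w P`. Hence for `a > 0` the unbalanced cycles of
deficit `a` with top edge `e` correspond bijectively to the `s`–`t` paths of length `w e - a`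
(such a path cannot be `e` itself). Closing a shortest path with `e` gives a cycle of deficit at
least `w e - d(s, t)`, so `w e - δ(G) ≤ d(s, t)`: every path of length `w e - δ(G)` is a shortest
path, and such paths exist exactly when `w e = d(s, t) + δ(G)`.
-/

namespace SimpleGraph.Walk

variable {G : SimpleGraph V}

lemma IsPath.exists_eq_cons_of_mem_edges {s t x : V} (hst : G.Adj s t) {p : G.Walk s x}
    (hp : p.IsPath) (he : s(s, t) ∈ p.edges) : ∃ r : G.Walk t x, p = cons hst r := by
  cases p with
  | nil => simp at he
  | cons h r =>
    rw [edges_cons, List.mem_cons] at he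
    rw [cons_isPath_iff] at hp
    rcases he with he | he
    · obtain rfl := Sym2.congr_right.mp he
      exact ⟨r, rfl⟩
    · exact absurd (r.fst_mem_support_of_mem_edges he) hp.2

lemma IsPath.eq_toWalk_of_mem_edges {s t : V} (hst : G.Adj s t) {p : G.Walk s t}
    (hp : p.IsPath) (he : s(s, t) ∈ p.edges) : p = hst.toWalk := by
  obtain ⟨r, rfl⟩ := hp.exists_eq_cons_of_mem_edges hst he
  rw [eq_nil_iff_nil.mpr (isPath_iff_nil.mp ((cons_isPath_iff _ _).mp hp).1)]

lemma IsPath.eq_of_edges_perm {u v : V} {p q : G.Walk u v} (hp : p.IsPath) (hq : q.IsPath)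
    (h : p.edges.Perm q.edges) : p = q := by
  induction p with
  | nil => exact (eq_nil_iff_nil.mpr (isPath_iff_nil.mp hq)).symm
  | cons hadj p ih =>
    obtain ⟨q', rfl⟩ := hq.exists_eq_cons_of_mem_edges hadj (h.subset (by simp))
    rw [cons_isPath_iff] at hp hq
    rw [ih hp.1 hq.1 (by simpa using h)]

lemma IsPath.eq_of_edges_toFinset_eq [DecidableEq V] {u v : V} {p q : G.Walk u v}
    (hp : p.IsPath) (hq : q.IsPath) (h : p.edges.toFinset = q.edges.toFinset) : p = q :=
  hp.eq_of_edges_perm hq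
    (List.perm_of_nodup_nodup_toFinset_eq hp.isTrail.edges_nodup hq.isTrail.edges_nodup h)

lemma IsTrail.sum_edges_toFinset [DecidableEq V] (w : Sym2 V → ℝ) {u v : V} {p : G.Walk u v}
    (hp : p.IsTrail) : ∑ f ∈ p.edges.toFinset, w f = wlen w p :=
  List.sum_toFinset w hp.edges_nodup

lemma IsCycle.exists_eq_cons_or_reverse_eq_cons {s t : V} (hst : G.Adj s t) {q : G.Walk s s}
    (hq : q.IsCycle) (he : s(s, t) ∈ q.edges) :
    ∃ r : G.Walk t s, q = cons hst r ∨ q.reverse = cons hst r := by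
  cases q with
  | nil => exact absurd hq not_isCycle_nil
  | cons h r =>
    rw [edges_cons, List.mem_cons] at he
    rcases he with he | he
    · obtain rfl := Sym2.congr_right.mp he
      exact ⟨r, .inl rfl⟩
    · have hr := ((cons_isCycle_iff r h).mp hq).1
      obtain ⟨r', hr'⟩ := hr.reverse.exists_eq_cons_of_mem_edges hst (by simpa using he)
      exact ⟨r'.append (cons h.symm nil), .inr (by rw [reverse_cons, hr', cons_append])⟩

lemma IsCycle.exists_isPath_edges_toFinset_eq_insert [DecidableEq V] {u s t : V}
    (hst : G.Adj s t) {q : G.Walk u u} (hq : q.IsCycle) (he : s(s, t) ∈ q.edges) :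
    ∃ p : G.Walk s t, p.IsPath ∧ s(s, t) ∉ p.edges ∧
      q.edges.toFinset = insert s(s, t) p.edges.toFinset := by
  have hs : s ∈ q.support := q.fst_mem_support_of_mem_edges he
  have hrot : (q.rotate s hs).edges.toFinset = q.edges.toFinset :=
    List.toFinset_eq_of_perm _ _ (q.rotate_edges s hs).perm
  obtain ⟨r, hr, hedges⟩ : ∃ r : G.Walk t s,
      (cons hst r).IsCycle ∧ (cons hst r).edges.toFinset = q.edges.toFinset := by
    obtain ⟨r, hr | hr⟩ := (hq.rotate hs).exists_eq_cons_or_reverse_eq_cons hst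
      (by simpa [← List.mem_toFinset, hrot] using he)
    · exact ⟨r, hr ▸ hq.rotate hs, by rw [← hr, hrot]⟩
    · refine ⟨r, hr ▸ (hq.rotate hs).reverse, ?_⟩
      rw [← hr, edges_reverse, List.toFinset_reverse, hrot]
  obtain ⟨hr, her⟩ := (cons_isCycle_iff r hst).mp hr
  exact ⟨r.reverse, hr.reverse, by simpa using her, by simp [← hedges]⟩

end SimpleGraph.Walk

open SimpleGraph.Walk

section Deficit

variable {G : SimpleGraph V} (w : Sym2 V → ℝ)

lemma wlen_toWalk {s t : V} (hst : G.Adj s t) : wlen w hst.toWalk = w s(s, t) := by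
  simp [wlen]

lemma two_mul_sub_sum_le_deficitSet {c : Finset (Sym2 V)} {e : Sym2 V} (he : e ∈ c) :
    2 * w e - ∑ f ∈ c, w f ≤ deficitSet w c := by
  have : w e ≤ sSup (w '' (c : Set (Sym2 V))) :=
    le_csSup ((c : Set (Sym2 V)).toFinite.image w).bddAbove ⟨e, he, rfl⟩
  rw [deficitSet]
  linarith

lemma deficitSet_eq_of_topOfSet [DecidableEq V] {c : Finset (Sym2 V)} {e : Sym2 V}
    (hw : ∀ f ∈ c, 0 ≤ w f) (htop : TopOfSet w c e) :
    deficitSet w c = w e - ∑ f ∈ c.erase e, w f := by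
  obtain ⟨he, hlt⟩ := htop
  have hmax : ∀ f ∈ c, w f ≤ w e := by
    intro f hf
    rcases eq_or_ne f e with rfl | hfe
    · rfl
    · have := Finset.single_le_sum (fun g hg => hw g (Finset.mem_of_mem_erase hg))
        (Finset.mem_erase.mpr ⟨hfe, hf⟩)
      linarith
  have hsup : sSup (w '' (c : Set (Sym2 V))) = w e :=
    IsGreatest.csSup_eq ⟨⟨e, he, rfl⟩, by rintro _ ⟨f, hf, rfl⟩; exact hmax f hf⟩
  rw [deficitSet, hsup, ← Finset.add_sum_erase c w he]
  ring

end Deficit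

section PathCycle

variable [DecidableEq V] {G : SimpleGraph V} {w : Sym2 V → ℝ} {s t : V}

lemma isCycleSet_insert_edges (hst : G.Adj s t) {p : G.Walk s t} (hp : p.IsPath)
    (he : s(s, t) ∉ p.edges) : IsCycleSet G (insert s(s, t) p.edges.toFinset) :=
  ⟨s, cons hst p.reverse, (cons_isCycle_iff _ _).mpr ⟨hp.reverse, by simpa using he⟩, by simp⟩

lemma IsCycleSet.exists_isPath_eq_insert {c : Finset (Sym2 V)} (hc : IsCycleSet G c)
    (hst : G.Adj s t) (he : s(s, t) ∈ c) :
    ∃ p : G.Walk s t, p.IsPath ∧ s(s, t) ∉ p.edges ∧ c = insert s(s, t) p.edges.toFinset := by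
  obtain ⟨u, q, hq, rfl⟩ := hc
  exact hq.exists_isPath_edges_toFinset_eq_insert hst (List.mem_toFinset.mp he)

lemma sum_insert_edges {e : Sym2 V} {p : G.Walk s t} (hp : p.IsTrail) (he : e ∉ p.edges) :
    ∑ f ∈ insert e p.edges.toFinset, w f = w e + wlen w p := by
  rw [Finset.sum_insert (by simpa using he), hp.sum_edges_toFinset w]

lemma topOfSet_insert_edges {e : Sym2 V} {p : G.Walk s t} (hp : p.IsTrail) (he : e ∉ p.edges)
    (hlt : wlen w p < w e) : TopOfSet w (insert e p.edges.toFinset) e := by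
  refine ⟨Finset.mem_insert_self _ _, ?_⟩
  rwa [Finset.erase_insert (by simpa using he), hp.sum_edges_toFinset w]

lemma topOfSet_insert_edges_and_deficitSet_eq_iff {e : Sym2 V} {p : G.Walk s t} {a : ℝ}
    (hw : ∀ f ∈ insert e p.edges.toFinset, 0 ≤ w f) (hp : p.IsTrail) (he : e ∉ p.edges)
    (ha : 0 < a) :
    TopOfSet w (insert e p.edges.toFinset) e ∧ deficitSet w (insert e p.edges.toFinset) = a ↔
      wlen w p = w e - a := by
  have hdef : ∀ htop : TopOfSet w (insert e p.edges.toFinset) e,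
      deficitSet w (insert e p.edges.toFinset) = w e - wlen w p := fun htop => by
    rw [deficitSet_eq_of_topOfSet w hw htop, Finset.erase_insert (by simpa using he),
      hp.sum_edges_toFinset w]
  constructor
  · rintro ⟨htop, hdefa⟩
    linarith [hdef htop]
  · intro hlen
    have htop := topOfSet_insert_edges hp he (by linarith)
    exact ⟨htop, by linarith [hdef htop]⟩

theorem NT_eq_card_isPath (hw : ∀ e ∈ G.edgeSet, 0 < w e) (hst : G.Adj s t) {a : ℝ}
    (ha : 0 < a) :
    NT G w s(s, t) a = Nat.card {p : G.Walk s t // p.IsPath ∧ wlen w p = w s(s, t) - a} := by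
  have hwp : ∀ p : G.Walk s t, ∀ f ∈ insert s(s, t) p.edges.toFinset, 0 ≤ w f := by
    intro p f hf
    rcases Finset.mem_insert.mp hf with rfl | hf
    · exact (hw _ hst).le
    · exact (hw f (p.edges_subset_edgeSet (List.mem_toFinset.mp hf))).le
  have hne : ∀ p : G.Walk s t, p.IsPath → wlen w p = w s(s, t) - a → s(s, t) ∉ p.edges := by
    intro p hp hlen he
    rw [hp.eq_toWalk_of_mem_edges hst he, wlen_toWalk] at hlen
    linarith
  let F : {p : G.Walk s t // p.IsPath ∧ wlen w p = w s(s, t) - a} →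
      {c : Finset (Sym2 V) // IsCycleSet G c ∧ TopOfSet w c s(s, t) ∧ deficitSet w c = a} :=
    fun ⟨p, hp, hlen⟩ => ⟨insert s(s, t) p.edges.toFinset,
      isCycleSet_insert_edges hst hp (hne p hp hlen),
      (topOfSet_insert_edges_and_deficitSet_eq_iff (hwp p) hp.isTrail (hne p hp hlen) ha).mpr hlen⟩
  refine (Nat.card_eq_of_bijective F ⟨?_, ?_⟩).symm
  · rintro ⟨p, hp, hlp⟩ ⟨q, hq, hlq⟩ h
    have hpq := congrArg (fun c => Finset.erase c.1 s(s, t)) h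
    simp only [F] at hpq
    rw [Finset.erase_insert (by simpa using hne p hp hlp),
      Finset.erase_insert (by simpa using hne q hq hlq)] at hpq
    exact Subtype.ext (hp.eq_of_edges_toFinset_eq hq hpq)
  · rintro ⟨c, hc, htop, hdef⟩
    obtain ⟨p, hp, he, rfl⟩ := hc.exists_isPath_eq_insert hst htop.1
    exact ⟨⟨p, hp, (topOfSet_insert_edges_and_deficitSet_eq_iff (hwp p) hp.isTrail he ha).mp
      ⟨htop, hdef⟩⟩, rfl⟩

end PathCycle

section Finite

variable [Finite V] {G : SimpleGraph V} (w : Sym2 V → ℝ)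

lemma finite_setOf_wlen_isPath (u v : V) :
    {x : ℝ | ∃ p : G.Walk u v, p.IsPath ∧ wlen w p = x}.Finite := by
  classical
  have := Fintype.ofFinite V
  refine (Set.finite_range fun p : G.Path u v => wlen w p.1).subset ?_
  rintro _ ⟨p, hp, rfl⟩
  exact ⟨⟨p, hp⟩, rfl⟩

lemma spDist_le_wlen {u v : V} {p : G.Walk u v} (hp : p.IsPath) : spDist G w u v ≤ wlen w p :=
  csInf_le (finite_setOf_wlen_isPath w u v).bddBelow ⟨p, hp, rfl⟩

lemma SimpleGraph.Reachable.exists_isPath_wlen_eq_spDist {u v : V} (h : G.Reachable u v) :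
    ∃ p : G.Walk u v, p.IsPath ∧ wlen w p = spDist G w u v := by
  classical
  obtain ⟨q⟩ := h
  have hne : {x : ℝ | ∃ p : G.Walk u v, p.IsPath ∧ wlen w p = x}.Nonempty :=
    ⟨_, q.toPath.1, q.toPath.2, rfl⟩
  exact hne.csInf_mem (finite_setOf_wlen_isPath w u v)

variable [DecidableEq V]

lemma deficitSet_le_deltaG {c : Finset (Sym2 V)} (hc : IsCycleSet G c) :
    deficitSet w c ≤ deltaG G w := by
  have hfin : {x : ℝ | ∃ c : Finset (Sym2 V), IsCycleSet G c ∧ deficitSet w c = x}.Finite :=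
    (Set.finite_range (deficitSet w)).subset (by rintro _ ⟨c, -, rfl⟩; exact ⟨c, rfl⟩)
  exact le_csSup hfin.bddAbove ⟨c, hc, rfl⟩

variable {w}

lemma deltaG_pos (hw : ∀ e ∈ G.edgeSet, 0 < w e)
    (h : ∃ c : Finset (Sym2 V), IsCycleSet G c ∧ UnbalancedSet w c) : 0 < deltaG G w := by
  obtain ⟨c, hc, e, htop⟩ := h
  have hwc : ∀ f ∈ c, 0 ≤ w f := by
    obtain ⟨u, q, -, rfl⟩ := hc
    exact fun f hf => (hw f (q.edges_subset_edgeSet (List.mem_toFinset.mp hf))).le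
  have := deficitSet_le_deltaG w hc
  rw [deficitSet_eq_of_topOfSet w hwc htop] at this
  linarith [htop.2]

lemma sub_deltaG_le_spDist (hδ : 0 ≤ deltaG G w) {s t : V} (hst : G.Adj s t) :
    w s(s, t) - deltaG G w ≤ spDist G w s t := by
  obtain ⟨p, hp, hlen⟩ := hst.reachable.exists_isPath_wlen_eq_spDist w
  rw [← hlen]
  by_cases he : s(s, t) ∈ p.edges
  · rw [hp.eq_toWalk_of_mem_edges hst he, wlen_toWalk]
    linarith
  · have := two_mul_sub_sum_le_deficitSet w (Finset.mem_insert_self s(s, t) p.edges.toFinset)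
    rw [sum_insert_edges hp.isTrail he] at this
    linarith [deficitSet_le_deltaG w (isCycleSet_insert_edges hst hp he)]

end Finite

theorem stmt15_general [Fintype V] [DecidableEq V] (G : SimpleGraph V)
    (w : Sym2 V → ℝ) (hw : ∀ e ∈ G.edgeSet, 0 < w e)
    (hunb : ∃ c : Finset (Sym2 V), IsCycleSet G c ∧ UnbalancedSet w c)
    (s t : V) (hst : G.Adj s t) :
    (w s(s, t) = spDist G w s t + deltaG G w →
      NT G w s(s, t) (deltaG G w) = csp G w s t) ∧
    (w s(s, t) ≠ spDist G w s t + deltaG G w →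
      NT G w s(s, t) (deltaG G w) = 0) := by
  have hδ := deltaG_pos hw hunb
  rw [NT_eq_card_isPath hw hst hδ]
  refine ⟨fun h => ?_, fun h => ?_⟩
  · rw [csp, show w s(s, t) - deltaG G w = spDist G w s t by linarith]
  · have : IsEmpty {p : G.Walk s t // p.IsPath ∧ wlen w p = w s(s, t) - deltaG G w} :=
      ⟨fun ⟨p, hp, hlen⟩ => h (by linarith [spDist_le_wlen w hp, sub_deltaG_le_spDist hδ.le hst])⟩
    exact Nat.card_of_isEmpty

/-- For any edge `e = (s,t)` of a general dissimilarity graph containing at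
least one unbalanced cycle: if `w(e) = d(s,t) + δ(G)` then
`N_T(e, δ(G)) = csp(s,t)`, and otherwise `N_T(e, δ(G)) = 0`. -/
theorem stmt15 [Fintype V] [DecidableEq V] (G : SimpleGraph V)
    (hconn : G.Connected) (w : Sym2 V → ℝ) (hw : ∀ e ∈ G.edgeSet, 0 < w e)
    (hunb : ∃ c : Finset (Sym2 V), IsCycleSet G c ∧ UnbalancedSet w c)
    (s t : V) (hst : G.Adj s t) :
    (w s(s, t) = spDist G w s t + deltaG G w →
      NT G w s(s, t) (deltaG G w) = csp G w s t) ∧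
    (w s(s, t) ≠ spDist G w s t + deltaG G w →
      NT G w s(s, t) (deltaG G w) = 0) :=
  stmt15_general G w hw hunb s t hst
end
end
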